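/- arXiv:1901.04377 — 3 statements merged into one kernel-verified Lean document; each statement's English description precedes it below -/
import Mathlib

section
/- For multilinear polynomials f and g over a field F in variables Y ∪ Z such that the sets of variables actually occurring in f and g are disjoint, the rank of the partial derivative matrix of the product fg equals the product of the ranks of the partial derivative matrices of f and g. -/
open MvPolynomial

/-- The exponent vector of the multilinear monomial `∏_{i∈p} y_i · ∏_{j∈q} z_j`,
where the `Y` variables are `Sum.inl` and the `Z` variables are `Sum.inr`. -/
noncomputable def mlMonom (m : ℕ) (p q : Finset (Fin m)) : (Fin m ⊕ Fin m) →₀ ℕ :=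
  (∑ i ∈ p, Finsupp.single (Sum.inl i) 1) + (∑ j ∈ q, Finsupp.single (Sum.inr j) 1)

/-- The partial derivative matrix of a polynomial in the variables `Y ∪ Z`. -/
noncomputable def pdMatrix (F : Type) [Field F] (m : ℕ)
    (f : MvPolynomial (Fin m ⊕ Fin m) F) :
    Matrix (Finset (Fin m)) (Finset (Fin m)) F :=
  fun p q => f.coeff (mlMonom m p q)

noncomputable def pdRank (F : Type) [Field F] (m : ℕ)
    (f : MvPolynomial (Fin m ⊕ Fin m) F) : ℕ :=
  (pdMatrix F m f).rank

/-- A polynomial is multilinear if every variable has degree at most 1 in each monomial. -/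
def IsMultilinear {F V : Type*} [CommSemiring F] (f : MvPolynomial V F) : Prop :=
  ∀ mo ∈ f.support, ∀ v, mo v ≤ 1

/-!
The partial derivative matrix of `h` vanishes outside the rows `p ⊆ Y ∩ var(h)` and the columns
`q ⊆ Z ∩ var(h)`, and deleting zero rows and columns does not change the rank. If `var(f)` and
`var(g)` are disjoint, a multilinear monomial in `var(f) ∪ var(g)` splits uniquely as `u w` with
`u` in `var(f)` and `w` in `var(g)`, and the coefficient of `u w` in `f g` is the product of the
coefficient of `u` in `f` and that of `w` in `g`. Hence, once zero rows and columns are deleted,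
`M_{fg}` and the Kronecker product `M_f ⊗ M_g` are the same matrix, and the rank of a Kronecker
product is the product of the ranks.
-/

open Matrix Kronecker

section Rank

open Module

variable {F : Type*} [Field F]

theorem TensorProduct.finrank_range_map {M N M' N' : Type*} [AddCommGroup M] [AddCommGroup N]
    [AddCommGroup M'] [AddCommGroup N'] [Module F M] [Module F N] [Module F M'] [Module F N']
    (f : M →ₗ[F] M') (g : N →ₗ[F] N') :
    finrank F (LinearMap.range (TensorProduct.map f g)) =
      finrank F (LinearMap.range f) * finrank F (LinearMap.range g) := by
  have hfactor : TensorProduct.map f g =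
      (TensorProduct.mapIncl (LinearMap.range f) (LinearMap.range g)) ∘ₗ
        TensorProduct.map f.rangeRestrict g.rangeRestrict := by
    rw [TensorProduct.mapIncl, ← TensorProduct.map_comp]
    rfl
  have hsurj : Function.Surjective (TensorProduct.map f.rangeRestrict g.rangeRestrict) :=
    TensorProduct.map_surjective f.surjective_rangeRestrict g.surjective_rangeRestrict
  have hinj : Function.Injective (TensorProduct.mapIncl (LinearMap.range f)
      (LinearMap.range g)) := by
    rw [TensorProduct.mapIncl, ← LinearMap.lTensor_comp_rTensor, LinearMap.coe_comp]
    exact (Module.Flat.lTensor_preserves_injective_linearMap _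
        (Submodule.injective_subtype _)).comp
      (Module.Flat.rTensor_preserves_injective_linearMap _ (Submodule.injective_subtype _))
  rw [hfactor, LinearMap.range_comp, LinearMap.range_eq_top.mpr hsurj, Submodule.map_top,
    LinearMap.finrank_range_of_inj hinj, Module.finrank_tensorProduct]

theorem Matrix.rank_kronecker {ι κ ι' κ' : Type*} [Fintype ι] [Fintype κ] [Fintype ι']
    [Fintype κ'] (A : Matrix ι κ F) (B : Matrix ι' κ' F) :
    (A ⊗ₖ B).rank = A.rank * B.rank := by
  classical
  rw [A.rank_eq_finrank_range_toLin (Pi.basisFun F ι) (Pi.basisFun F κ),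
      B.rank_eq_finrank_range_toLin (Pi.basisFun F ι') (Pi.basisFun F κ'),
      (A ⊗ₖ B).rank_eq_finrank_range_toLin
        ((Pi.basisFun F ι).tensorProduct (Pi.basisFun F ι'))
        ((Pi.basisFun F κ).tensorProduct (Pi.basisFun F κ')),
      Matrix.toLin_kronecker, TensorProduct.finrank_range_map]

end Rank

theorem Matrix.rank_submatrix_eq_of_ne_zero_mem_range {R m n m₀ n₀ : Type*} [CommSemiring R]
    [StrongRankCondition R] [Fintype n] [Fintype m₀] [Fintype n₀]
    (A : Matrix m n R) {r : m₀ → m} {c : n₀ → n}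
    (hr : Function.Injective r) (hc : Function.Injective c)
    (hA : ∀ i j, A i j ≠ 0 → i ∈ Set.range r ∧ j ∈ Set.range c) :
    (A.submatrix r c).rank = A.rank := by
  classical
  refine (rank_submatrix_le A r c).antisymm ?_
  let P : Matrix m m₀ R := of fun i i₀ => if r i₀ = i then 1 else 0
  let Q : Matrix n₀ n R := of fun j₀ j => if c j₀ = j then 1 else 0
  have hPQ : P * A.submatrix r c * Q = A := by
    ext i j
    by_cases hij : i ∈ Set.range r ∧ j ∈ Set.range c
    · obtain ⟨⟨i₀, rfl⟩, ⟨j₀, rfl⟩⟩ := hij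
      simp only [P, Q, mul_apply, of_apply, submatrix_apply, hr.eq_iff, hc.eq_iff]
      simp
    · have h0 : A i j = 0 := by_contra fun h => hij (hA i j h)
      simp only [P, Q, mul_apply, of_apply, submatrix_apply, h0]
      refine Finset.sum_eq_zero fun j₀ _ => ?_
      rw [Finset.sum_mul]
      refine Finset.sum_eq_zero fun i₀ _ => ?_
      split_ifs with hi hj <;> simp_all
  calc A.rank = (P * A.submatrix r c * Q).rank := by rw [hPQ]
    _ ≤ (P * A.submatrix r c).rank := rank_mul_le_left _ _
    _ ≤ (A.submatrix r c).rank := rank_mul_le_right _ _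

theorem MvPolynomial.coeff_add_mul_of_disjoint_vars {σ R : Type*} [CommSemiring R]
    {f g : MvPolynomial σ R} (hdisj : Disjoint f.vars g.vars) {u w : σ →₀ ℕ}
    (hu : u.support ⊆ f.vars) (hw : w.support ⊆ g.vars) :
    coeff (u + w) (f * g) = coeff u f * coeff w g := by
  classical
  rw [coeff_mul,
    Finset.sum_eq_single_of_mem (u, w) (Finset.HasAntidiagonal.mem_antidiagonal.mpr rfl)]
  rintro ⟨u', w'⟩ huw hne
  by_contra hnz
  have hu' := support_subset_vars_of_mem_support (mem_support_iff.mpr (left_ne_zero_of_mul hnz))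
  have hw' := support_subset_vars_of_mem_support (mem_support_iff.mpr (right_ne_zero_of_mul hnz))
  replace huw : u' + w' = u + w := Finset.HasAntidiagonal.mem_antidiagonal.mp huw
  have hu'u : u' = u := by
    ext v
    by_cases hv : v ∈ f.vars
    · have hwv : w v = 0 := Finsupp.notMem_support_iff.mp fun h =>
        Finset.disjoint_left.mp hdisj hv (hw h)
      have hw'v : w' v = 0 := Finsupp.notMem_support_iff.mp fun h =>
        Finset.disjoint_left.mp hdisj hv (hw' h)
      simpa [hwv, hw'v] using DFunLike.congr_fun huw v
    · rw [Finsupp.notMem_support_iff.mp fun h => hv (hu' h),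
        Finsupp.notMem_support_iff.mp fun h => hv (hu h)]
  subst hu'u
  exact hne (Prod.ext rfl (add_left_cancel huw))

section FinsetLemmas

variable {γ : Type*} [DecidableEq γ]

theorem Finset.disjoint_toLeft_of_disjoint {α β : Type*} {s t : Finset (α ⊕ β)}
    (h : Disjoint s t) : Disjoint s.toLeft t.toLeft :=
  disjoint_left.mpr fun _ ha hb => disjoint_left.mp h (mem_toLeft.mp ha) (mem_toLeft.mp hb)

theorem Finset.disjoint_toRight_of_disjoint {α β : Type*} {s t : Finset (α ⊕ β)}
    (h : Disjoint s t) : Disjoint s.toRight t.toRight :=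
  disjoint_left.mpr fun _ ha hb => disjoint_left.mp h (mem_toRight.mp ha) (mem_toRight.mp hb)

def Finset.unionSubsets (A B : Finset γ) (x : {a // a ⊆ A} × {b // b ⊆ B}) : Finset γ :=
  x.1.1 ∪ x.2.1

theorem Finset.unionSubsets_injective {A B : Finset γ} (h : Disjoint A B) :
    Function.Injective (unionSubsets A B) := by
  have parts : ∀ {a b : Finset γ}, a ⊆ A → b ⊆ B → (a ∪ b) ∩ A = a ∧ (a ∪ b) ∩ B = b :=
    fun ha hb => ⟨by rw [union_inter_distrib_right, inter_eq_left.mpr ha,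
        disjoint_iff_inter_eq_empty.mp (h.symm.mono_left hb), union_empty],
      by rw [union_inter_distrib_right, inter_eq_left.mpr hb,
        disjoint_iff_inter_eq_empty.mp (h.mono_left ha), empty_union]⟩
  rintro ⟨⟨a, ha⟩, ⟨b, hb⟩⟩ ⟨⟨a', ha'⟩, ⟨b', hb'⟩⟩ (hab : a ∪ b = a' ∪ b')
  have h₁ := parts ha hb
  have h₂ := parts ha' hb'
  rw [hab] at h₁
  exact Prod.ext (Subtype.ext (h₁.1.symm.trans h₂.1)) (Subtype.ext (h₁.2.symm.trans h₂.2))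

theorem Finset.mem_range_unionSubsets {A B p : Finset γ} (hp : p ⊆ A ∪ B) :
    p ∈ Set.range (unionSubsets A B) :=
  ⟨(⟨p ∩ A, inter_subset_right⟩, ⟨p ∩ B, inter_subset_right⟩),
    by simp [unionSubsets, ← inter_union_distrib_left, inter_eq_left.mpr hp]⟩

end FinsetLemmas

section PartialDerivativeMatrix

variable {F : Type} [Field F] {m : ℕ}

theorem mlMonom_eq_sum_disjSum (p q : Finset (Fin m)) :
    mlMonom m p q = ∑ v ∈ p.disjSum q, Finsupp.single v 1 := by
  rw [Finset.sum_disjSum, mlMonom]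

theorem support_mlMonom_subset_iff {p q : Finset (Fin m)} {s : Finset (Fin m ⊕ Fin m)} :
    (mlMonom m p q).support ⊆ s ↔ p ⊆ s.toLeft ∧ q ⊆ s.toRight := by
  have support_eq : (mlMonom m p q).support = p.disjSum q := by
    ext v
    simp only [mlMonom_eq_sum_disjSum, Finsupp.mem_support_iff, Finsupp.finsetSum_apply,
      Finsupp.single_apply]
    simp
  rw [support_eq, Finset.disjSum_subset]

theorem mlMonom_union {p p' q q' : Finset (Fin m)} (hp : Disjoint p p') (hq : Disjoint q q') :
    mlMonom m (p ∪ p') (q ∪ q') = mlMonom m p q + mlMonom m p' q' := by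
  simp only [mlMonom, Finset.sum_union hp, Finset.sum_union hq]
  abel

theorem subset_vars_of_pdMatrix_ne_zero {h : MvPolynomial (Fin m ⊕ Fin m) F}
    {p q : Finset (Fin m)} (hpq : pdMatrix F m h p q ≠ 0) :
    p ⊆ h.vars.toLeft ∧ q ⊆ h.vars.toRight :=
  support_mlMonom_subset_iff.mp <| support_subset_vars_of_mem_support (mem_support_iff.mpr hpq)

variable {f g : MvPolynomial (Fin m ⊕ Fin m) F}

theorem rank_submatrix_unionSubsets_pdMatrix_mul (hdisj : Disjoint f.vars g.vars) :
    ((pdMatrix F m (f * g)).submatrix (Finset.unionSubsets f.vars.toLeft g.vars.toLeft)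
      (Finset.unionSubsets f.vars.toRight g.vars.toRight)).rank = pdRank F m (f * g) := by
  refine Matrix.rank_submatrix_eq_of_ne_zero_mem_range _
    (Finset.unionSubsets_injective (Finset.disjoint_toLeft_of_disjoint hdisj))
    (Finset.unionSubsets_injective (Finset.disjoint_toRight_of_disjoint hdisj)) fun p q hpq => ?_
  have hvars := vars_mul f g
  obtain ⟨hp, hq⟩ := subset_vars_of_pdMatrix_ne_zero hpq
  exact ⟨Finset.mem_range_unionSubsets
      ((hp.trans (Finset.toLeft_subset_toLeft hvars)).trans_eq Finset.toLeft_union),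
    Finset.mem_range_unionSubsets
      ((hq.trans (Finset.toRight_subset_toRight hvars)).trans_eq Finset.toRight_union)⟩

theorem pdMatrix_mul_submatrix_unionSubsets (hdisj : Disjoint f.vars g.vars) :
    (pdMatrix F m (f * g)).submatrix (Finset.unionSubsets f.vars.toLeft g.vars.toLeft)
        (Finset.unionSubsets f.vars.toRight g.vars.toRight) =
      (pdMatrix F m f ⊗ₖ pdMatrix F m g).submatrix
        (Prod.map Subtype.val Subtype.val) (Prod.map Subtype.val Subtype.val) := by
  ext ⟨⟨a, ha⟩, ⟨b, hb⟩⟩ ⟨⟨a', ha'⟩, ⟨b', hb'⟩⟩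
  have hY := Finset.disjoint_toLeft_of_disjoint hdisj
  have hZ := Finset.disjoint_toRight_of_disjoint hdisj
  simp only [submatrix_apply, kroneckerMap_apply, Prod.map, pdMatrix, Finset.unionSubsets]
  rw [mlMonom_union (hY.mono ha hb) (hZ.mono ha' hb'), coeff_add_mul_of_disjoint_vars hdisj
    (support_mlMonom_subset_iff.mpr ⟨ha, ha'⟩) (support_mlMonom_subset_iff.mpr ⟨hb, hb'⟩)]

theorem rank_kronecker_pdMatrix_submatrix_val :
    ((pdMatrix F m f ⊗ₖ pdMatrix F m g).submatrix
      (Prod.map Subtype.val Subtype.val :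
        {a // a ⊆ f.vars.toLeft} × {b // b ⊆ g.vars.toLeft} → _)
      (Prod.map Subtype.val Subtype.val :
        {a // a ⊆ f.vars.toRight} × {b // b ⊆ g.vars.toRight} → _)).rank =
      pdRank F m f * pdRank F m g := by
  rw [pdRank, pdRank, ← Matrix.rank_kronecker]
  refine Matrix.rank_submatrix_eq_of_ne_zero_mem_range _
    (Subtype.val_injective.prodMap Subtype.val_injective)
    (Subtype.val_injective.prodMap Subtype.val_injective) ?_
  rintro ⟨p₁, p₂⟩ ⟨q₁, q₂⟩ h
  obtain ⟨hp₁, hq₁⟩ := subset_vars_of_pdMatrix_ne_zero (left_ne_zero_of_mul h)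
  obtain ⟨hp₂, hq₂⟩ := subset_vars_of_pdMatrix_ne_zero (right_ne_zero_of_mul h)
  exact ⟨⟨(⟨p₁, hp₁⟩, ⟨p₂, hp₂⟩), rfl⟩, ⟨(⟨q₁, hq₁⟩, ⟨q₂, hq₂⟩), rfl⟩⟩

end PartialDerivativeMatrix

theorem pdRank_mul_general (F : Type) [Field F] (m : ℕ)
    (f g : MvPolynomial (Fin m ⊕ Fin m) F)
    (hdisj : Disjoint f.vars g.vars) :
    pdRank F m (f * g) = pdRank F m f * pdRank F m g := by
  rw [← rank_submatrix_unionSubsets_pdMatrix_mul hdisj, pdMatrix_mul_submatrix_unionSubsets hdisj,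
    rank_kronecker_pdMatrix_submatrix_val]

/-- multiplicativity of rank for products of polynomials on
disjoint sets of variables. -/
theorem pdRank_mul (F : Type) [Field F] (m : ℕ)
    (f g : MvPolynomial (Fin m ⊕ Fin m) F)
    (hf : IsMultilinear f) (hg : IsMultilinear g)
    (hdisj : Disjoint f.vars g.vars) :
    pdRank F m (f * g) = pdRank F m f * pdRank F m g :=
  pdRank_mul_general F m f g hdisj
end

section
/- If a multilinear polynomial f depends only on variables in Y₁ ∪ Z₁ with Y₁ ⊆ Y and Z₁ ⊆ Z, then the rank of its partial derivative matrix is at most 2^{min(|Y₁|, |Z₁|)}. -/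
open MvPolynomial

/-!
If `f.coeff (mlMonom m p q) ≠ 0` then every variable of that monomial occurs in `f`, so `p ⊆ Y₁`
and `q ⊆ Z₁`. Hence all rows of the partial derivative matrix outside the `2 ^ |Y₁|` subsets of
`Y₁` vanish, and likewise all columns outside the `2 ^ |Z₁|` subsets of `Z₁`.
-/

open scoped Matrix

theorem Matrix.rank_le_card_of_forall_notMem_eq_zero {m n R : Type*} [Fintype n] [Field R]
    (M : Matrix m n R) (s : Finset n) (h : ∀ i, ∀ j ∉ s, M i j = 0) :
    M.rank ≤ s.card := by
  classical
  rw [Matrix.rank_eq_finrank_span_cols]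
  calc Module.finrank R (Submodule.span R (Set.range Mᵀ))
      ≤ Module.finrank R (Submodule.span R (s.image Mᵀ : Set (m → R))) := by
        apply Submodule.finrank_mono
        refine Submodule.span_le.2 (Set.range_subset_iff.2 fun j => ?_)
        by_cases hj : j ∈ s
        · exact Submodule.subset_span (Finset.mem_coe.2 (Finset.mem_image_of_mem _ hj))
        · have : Mᵀ j = 0 := funext fun i => h i j hj
          simp [this]
    _ ≤ (s.image Mᵀ).card := finrank_span_finset_le_card _
    _ ≤ s.card := Finset.card_image_le

theorem support_mlMonom (m : ℕ) (p q : Finset (Fin m)) :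
    (mlMonom m p q).support = p.disjSum q := by
  ext (i | j) <;> simp [mlMonom, Finsupp.single_apply]

theorem subset_and_subset_of_coeff_mlMonom_ne_zero {R : Type*} [CommSemiring R] {m : ℕ}
    {f : MvPolynomial (Fin m ⊕ Fin m) R} {Y₁ Z₁ : Finset (Fin m)}
    (hvars : f.vars ⊆ Y₁.image Sum.inl ∪ Z₁.image Sum.inr) {p q : Finset (Fin m)}
    (h : f.coeff (mlMonom m p q) ≠ 0) : p ⊆ Y₁ ∧ q ⊆ Z₁ := by
  have hsupp := (support_subset_vars_of_mem_support (mem_support_iff.2 h)).trans hvars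
  rw [support_mlMonom] at hsupp
  exact ⟨fun i hi => by simpa using hsupp (Finset.inl_mem_disjSum.2 hi),
    fun j hj => by simpa using hsupp (Finset.inr_mem_disjSum.2 hj)⟩

section

variable {F : Type} [Field F] {m : ℕ} {f : MvPolynomial (Fin m ⊕ Fin m) F} {Y₁ Z₁ : Finset (Fin m)}

theorem pdRank_le_two_pow_card_left (hvars : f.vars ⊆ Y₁.image Sum.inl ∪ Z₁.image Sum.inr) :
    pdRank F m f ≤ 2 ^ Y₁.card := by
  rw [pdRank, ← Matrix.rank_transpose, ← Finset.card_powerset]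
  refine (pdMatrix F m f)ᵀ.rank_le_card_of_forall_notMem_eq_zero _ fun q p hp => ?_
  by_contra h
  exact hp (Finset.mem_powerset.2 (subset_and_subset_of_coeff_mlMonom_ne_zero hvars h).1)

theorem pdRank_le_two_pow_card_right (hvars : f.vars ⊆ Y₁.image Sum.inl ∪ Z₁.image Sum.inr) :
    pdRank F m f ≤ 2 ^ Z₁.card := by
  rw [pdRank, ← Finset.card_powerset]
  refine (pdMatrix F m f).rank_le_card_of_forall_notMem_eq_zero _ fun p q hq => ?_
  by_contra h
  exact hq (Finset.mem_powerset.2 (subset_and_subset_of_coeff_mlMonom_ne_zero hvars h).2)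

end

theorem pdRank_le_of_vars_subset_general (F : Type) [Field F] (m : ℕ)
    (f : MvPolynomial (Fin m ⊕ Fin m) F)
    (Y₁ Z₁ : Finset (Fin m))
    (hvars : f.vars ⊆ Y₁.image Sum.inl ∪ Z₁.image Sum.inr) :
    pdRank F m f ≤ 2 ^ (min Y₁.card Z₁.card) := by
  rw [(pow_right_mono₀ one_le_two).map_min]
  exact le_min (pdRank_le_two_pow_card_left hvars) (pdRank_le_two_pow_card_right hvars)

/-- if `f` depends only on variables in `Y₁ ∪ Z₁` with `Y₁ ⊆ Y`,
`Z₁ ⊆ Z`, then its partial derivative matrix has rank at most `2^min(|Y₁|,|Z₁|)`. -/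
theorem pdRank_le_of_vars_subset (F : Type) [Field F] (m : ℕ)
    (f : MvPolynomial (Fin m ⊕ Fin m) F) (hf : IsMultilinear f)
    (Y₁ Z₁ : Finset (Fin m))
    (hvars : f.vars ⊆ Y₁.image Sum.inl ∪ Z₁.image Sum.inr) :
    pdRank F m f ≤ 2 ^ (min Y₁.card Z₁.card) :=
  pdRank_le_of_vars_subset_general F m f Y₁ Z₁ hvars
end

section
/- Let φ : X → Y ∪ Z be a partition of the variable set X and let X₁ ⊆ X be monochromatic under φ, i.e., either φ(X₁) ∩ Y = ∅ or φ(X₁) ∩ Z = ∅. Then for any multilinear polynomial p depending only on variables in X₁, the rank of the partial derivative matrix of p^φ (p with each x ∈ X₁ relabeled by φ(x)) is at most 1. -/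
/-!
If `φ` sends every variable of `X₁` into `Y`, then `p^φ` contains no `Z`-variable, so every
entry of its partial derivative matrix outside the column `q = ∅` vanishes; a matrix supported
on a single column is an outer product and has rank at most `1`. The case `φ(X₁) ⊆ Z` is the
same with the row `p = ∅`.
-/

open MvPolynomial

namespace Matrix

variable {ι κ R : Type*} [Fintype κ] [CommRing R] [StrongRankCondition R]

theorem rank_le_one_of_eq_zero_of_ne_col [DecidableEq κ] (M : Matrix ι κ R) (c : κ)
    (h : ∀ i j, j ≠ c → M i j = 0) : M.rank ≤ 1 := by
  have hM : M = vecMulVec (fun i => M i c) (Pi.single c 1) := by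
    ext i j
    by_cases hj : j = c
    · subst hj; simp [vecMulVec_apply]
    · simp [vecMulVec_apply, hj, h i j hj]
  exact hM ▸ rank_vecMulVec_le _ _

theorem rank_le_one_of_eq_zero_of_ne_row [DecidableEq ι] (M : Matrix ι κ R) (r : ι)
    (h : ∀ i j, i ≠ r → M i j = 0) : M.rank ≤ 1 := by
  have hM : M = vecMulVec (Pi.single r 1) (M r) := by
    ext i j
    by_cases hi : i = r
    · subst hi; simp [vecMulVec_apply]
    · simp [vecMulVec_apply, hi, h i j hi]
  exact hM ▸ rank_vecMulVec_le _ _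

end Matrix

section PartialDerivativeMatrix

variable {R : Type*} [CommSemiring R] {F : Type} [Field F] {m : ℕ}

theorem mlMonom_apply_inl (p q : Finset (Fin m)) (i : Fin m) :
    mlMonom m p q (Sum.inl i) = if i ∈ p then 1 else 0 := by
  simp [mlMonom, Finsupp.single_apply]

theorem mlMonom_apply_inr (p q : Finset (Fin m)) (j : Fin m) :
    mlMonom m p q (Sum.inr j) = if j ∈ q then 1 else 0 := by
  simp [mlMonom, Finsupp.single_apply]

theorem coeff_mlMonom_eq_zero_of_mem_left
    {f : MvPolynomial (Fin m ⊕ Fin m) R} {p q : Finset (Fin m)} {i : Fin m} (hi : i ∈ p)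
    (hf : Sum.inl i ∉ f.vars) :
    f.coeff (mlMonom m p q) = 0 := by
  by_contra hne
  refine hf <| (mem_vars_iff_mem_support _).2 ⟨_, mem_support_iff.2 hne, ?_⟩
  simp [mlMonom_apply_inl, hi]

theorem coeff_mlMonom_eq_zero_of_mem_right
    {f : MvPolynomial (Fin m ⊕ Fin m) R} {p q : Finset (Fin m)} {j : Fin m} (hj : j ∈ q)
    (hf : Sum.inr j ∉ f.vars) :
    f.coeff (mlMonom m p q) = 0 := by
  by_contra hne
  refine hf <| (mem_vars_iff_mem_support _).2 ⟨_, mem_support_iff.2 hne, ?_⟩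
  simp [mlMonom_apply_inr, hj]

theorem pdRank_le_one_of_forall_inr_notMem_vars (f : MvPolynomial (Fin m ⊕ Fin m) F)
    (hf : ∀ j, Sum.inr j ∉ f.vars) : pdRank F m f ≤ 1 :=
  (pdMatrix F m f).rank_le_one_of_eq_zero_of_ne_col ∅ fun _ _ hq =>
    have ⟨j, hj⟩ := Finset.nonempty_iff_ne_empty.2 hq
    coeff_mlMonom_eq_zero_of_mem_right hj (hf j)

theorem pdRank_le_one_of_forall_inl_notMem_vars (f : MvPolynomial (Fin m ⊕ Fin m) F)
    (hf : ∀ i, Sum.inl i ∉ f.vars) : pdRank F m f ≤ 1 :=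
  (pdMatrix F m f).rank_le_one_of_eq_zero_of_ne_row ∅ fun _ _ hp =>
    have ⟨i, hi⟩ := Finset.nonempty_iff_ne_empty.2 hp
    coeff_mlMonom_eq_zero_of_mem_left hi (hf i)

end PartialDerivativeMatrix

theorem MvPolynomial.notMem_vars_rename_of_forall_ne {R σ τ : Type*} [CommSemiring R]
    [DecidableEq τ] (φ : σ → τ) {p : MvPolynomial σ R} {X₁ : Finset σ}
    (hvars : p.vars ⊆ X₁)
    {v : τ} (hv : ∀ x ∈ X₁, φ x ≠ v) : v ∉ (rename φ p).vars := fun hmem =>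
  have ⟨x, hx, hxv⟩ := Finset.mem_image.1 (vars_rename φ p hmem)
  hv x (hvars hx) hxv

theorem pdRank_le_one_of_monochromatic_general (F : Type) [Field F] (n m : ℕ)
    (φ : Fin n → Fin m ⊕ Fin m)
    (X₁ : Finset (Fin n))
    (hmono : (∀ x ∈ X₁, ∃ i, φ x = Sum.inl i) ∨ (∀ x ∈ X₁, ∃ i, φ x = Sum.inr i))
    (p : MvPolynomial (Fin n) F)
    (hvars : p.vars ⊆ X₁) :
    pdRank F m (MvPolynomial.rename φ p) ≤ 1 := by
  rcases hmono with hY | hZ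
  · refine pdRank_le_one_of_forall_inr_notMem_vars _ fun j => ?_
    refine notMem_vars_rename_of_forall_ne φ hvars fun x hx => ?_
    obtain ⟨i, hi⟩ := hY x hx
    simp [hi]
  · refine pdRank_le_one_of_forall_inl_notMem_vars _ fun i => ?_
    refine notMem_vars_rename_of_forall_ne φ hvars fun x hx => ?_
    obtain ⟨j, hj⟩ := hZ x hx
    simp [hj]

/-- a multilinear polynomial depending only on a monochromatic set
of variables has partial derivative matrix of rank at most 1 after relabeling
via the injective partition map `φ`. -/
theorem pdRank_le_one_of_monochromatic (F : Type) [Field F] (n m : ℕ)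
    (hbal : n = 2 * m)
    (φ : Fin n → Fin m ⊕ Fin m) (hinj : Function.Injective φ)
    (X₁ : Finset (Fin n))
    (hmono : (∀ x ∈ X₁, ∃ i, φ x = Sum.inl i) ∨ (∀ x ∈ X₁, ∃ i, φ x = Sum.inr i))
    (p : MvPolynomial (Fin n) F) (hml : IsMultilinear p)
    (hvars : p.vars ⊆ X₁) :
    pdRank F m (MvPolynomial.rename φ p) ≤ 1 :=
  pdRank_le_one_of_monochromatic_general F n m φ X₁ hmono p hvars
end
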